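/- For the KM system u̇_i = u_i(u_{i+1} - u_{i-1}) with u_0 = u_{N+1} = 0, the function H_2 = Σ_{i=1}^N (u_i²/2) + Σ_{i=1}^{N-1} u_i u_{i+1} is a constant of motion. -/

import Mathlib

/-!
Along the flow, `d/dt (u_i²/2) = u_i² u_{i+1} - u_{i-1} u_i²` and
`d/dt (u_i u_{i+1}) = (u_i u_{i+1} u_{i+2} - u_{i-1} u_i u_{i+1}) + (u_i u_{i+1}² - u_i² u_{i+1})`.
Summed over `i`, everything telescopes to boundary terms, each of which contains `u_0` or
`u_{N+1}` and therefore vanishes.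
-/

open Finset

namespace KM

/-- A state is a sequence `ℕ → ℝ` whose entries `1, …, N` are the coordinates; the entries `0` and
`N + 1` carry the boundary values. -/
def field (a : ℕ → ℝ) (i : ℕ) : ℝ := a i * (a (i + 1) - a (i - 1))

noncomputable def H2 (N : ℕ) (a : ℕ → ℝ) : ℝ :=
  (∑ i ∈ Icc 1 N, a i ^ 2 / 2) + ∑ i ∈ Icc 1 (N - 1), a i * a (i + 1)

def H2Deriv (N : ℕ) (a v : ℕ → ℝ) : ℝ :=
  (∑ i ∈ Icc 1 N, a i * v i) + ∑ i ∈ Icc 1 (N - 1), (v i * a (i + 1) + a i * v (i + 1))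

theorem hasDerivAt_H2 {N : ℕ} {u : ℝ → ℕ → ℝ} {v : ℕ → ℝ} {t : ℝ}
    (hu : ∀ i ∈ Icc 1 N, HasDerivAt (fun s => u s i) (v i) t) :
    HasDerivAt (fun s => H2 N (u s)) (H2Deriv N (u t) v) t := by
  refine HasDerivAt.add (HasDerivAt.fun_sum fun i hi => ?_) (HasDerivAt.fun_sum fun i hi => ?_)
  · exact (((hu i hi).fun_pow 2).div_const 2).congr_deriv (by ring)
  · obtain ⟨hi1, hiN⟩ := mem_Icc.mp hi
    exact (hu i (mem_Icc.mpr ⟨hi1, by omega⟩)).fun_mul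
      (hu (i + 1) (mem_Icc.mpr ⟨by omega, by omega⟩))

theorem H2Deriv_field_succ (a : ℕ → ℝ) (M : ℕ) :
    H2Deriv (M + 1) a (field a) =
      a (M + 1) ^ 2 * a (M + 2) + a M * a (M + 1) * a (M + 2)
        - a 0 * a 1 ^ 2 - a 0 * a 1 * a 2 := by
  induction M with
  | zero =>
    simp only [H2Deriv, field, zero_add, Icc_self, sum_singleton, Nat.reduceAdd, tsub_self,
      Order.lt_one_iff, Icc_eq_empty_of_lt, sum_empty, add_zero]
    ring
  | succ M ih =>
    simp only [H2Deriv, Nat.add_sub_cancel] at ih ⊢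
    rw [sum_Icc_succ_top (by omega : 1 ≤ M + 1), sum_Icc_succ_top (by omega : 1 ≤ M + 1 + 1)]
    simp only [field, Nat.add_sub_cancel] at ih ⊢
    linear_combination ih

theorem H2Deriv_field_eq_zero {N : ℕ} {a : ℕ → ℝ} (h0 : a 0 = 0) (hN : a (N + 1) = 0) :
    H2Deriv N a (field a) = 0 := by
  cases N with
  | zero => simp [H2Deriv]
  | succ M => rw [H2Deriv_field_succ, h0, hN]; ring

end KM

theorem km_H2_constant_of_motion (N : ℕ) (u : ℝ → ℕ → ℝ)
    (hu0 : ∀ t, u t 0 = 0) (huN : ∀ t, u t (N + 1) = 0)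
    (hode : ∀ t : ℝ, ∀ i ∈ Finset.Icc 1 N,
      HasDerivAt (fun s => u s i) (u t i * (u t (i + 1) - u t (i - 1))) t) :
    ∀ t : ℝ, HasDerivAt
      (fun s => (∑ i ∈ Finset.Icc 1 N, (u s i) ^ 2 / 2)
        + ∑ i ∈ Finset.Icc 1 (N - 1), u s i * u s (i + 1)) 0 t := by
  intro t
  have h := KM.hasDerivAt_H2 (v := KM.field (u t)) (hode t)
  rwa [KM.H2Deriv_field_eq_zero (hu0 t) (huN t)] at h
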